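/- Assume V is radially unbounded, that V is KL at every one of its critical points, and that for all y ∈ ℝ^m, V̇(y) = 0 implies ∇V(y) = 0. Let G_V be the set of global minima of V. Then G_V is attractive for the LCR and LCM algorithms: there exists γ > 0 such that for any sequence (y_n) generated by LCR or LCM, if dist(y_0, G_V) < γ then dist(y_n, G_V) → 0 as n → ∞. -/

import Mathlib

/-!
Radial unboundedness makes sublevel sets of `V` compact, so `G_V` is compact. The KL inequality
at the points of `G_V` excludes critical points at levels slightly above `min V` nearby, and
compactness yields `δ > 0` such that `V̇ < 0` (via `V̇ = 0 → ∇V = 0`) on the whole slab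
`min V < V ≤ min V + δ`; points within `γ` of `G_V` lie in this sublevel set.

Along an LCR or LCM orbit the Armijo condition makes `V(y_n)` decrease to a limit `c`. If
`c > min V`, the orbit stays in the compact set `c ≤ V ≤ min V + δ`, where `V̇ ≤ -ρ < 0` and
the Armijo test accepts every step below some `e > 0`; then backtracking keeps
`η_n ≥ min(η_init, e / f1)`, and `V` drops by a fixed amount at every step, which is impossible.
So `V(y_n) → min V`, and compactness of the sublevel set turns this into
`dist(y_n, G_V) → 0`.
-/

open Filter

/-- The Lyapunov derivative `V̇(y) = ⟪∇V(y), F(y)⟫`. -/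
noncomputable def lyapDeriv {m : ℕ}
    (F : EuclideanSpace ℝ (Fin m) → EuclideanSpace ℝ (Fin m))
    (V : EuclideanSpace ℝ (Fin m) → ℝ) (y : EuclideanSpace ℝ (Fin m)) : ℝ :=
  inner ℝ (gradient V y) (F y)

/-- `f(y,η) = V(y + η F(y)) − V(y) − λ η V̇(y)`. -/
noncomputable def armijoGap {m : ℕ}
    (F : EuclideanSpace ℝ (Fin m) → EuclideanSpace ℝ (Fin m))
    (V : EuclideanSpace ℝ (Fin m) → ℝ) (lam : ℝ)
    (y : EuclideanSpace ℝ (Fin m)) (η : ℝ) : ℝ :=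
  V (y + η • F y) - V y - lam * η * lyapDeriv F V y

/-- The LCR algorithm. -/
def IsLCR {m : ℕ}
    (F : EuclideanSpace ℝ (Fin m) → EuclideanSpace ℝ (Fin m))
    (V : EuclideanSpace ℝ (Fin m) → ℝ) (lam ηinit f1 : ℝ)
    (y : ℕ → EuclideanSpace ℝ (Fin m)) (η : ℕ → ℝ) : Prop :=
  ∀ n, y (n + 1) = y n + η n • F (y n) ∧
    ∃ p : ℕ, η n = ηinit / f1 ^ p ∧
      armijoGap F V lam (y n) (η n) ≤ 0 ∧
      ∀ k < p, ¬ armijoGap F V lam (y n) (ηinit / f1 ^ k) ≤ 0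

/-- The LCM algorithm (convention `η_{-1} = η_init / f2`). -/
def IsLCM {m : ℕ}
    (F : EuclideanSpace ℝ (Fin m) → EuclideanSpace ℝ (Fin m))
    (V : EuclideanSpace ℝ (Fin m) → ℝ) (lam ηinit f1 f2 : ℝ)
    (y : ℕ → EuclideanSpace ℝ (Fin m)) (η : ℕ → ℝ) : Prop :=
  ∀ n, y (n + 1) = y n + η n • F (y n) ∧
    ∃ p : ℕ, η n = (if n = 0 then ηinit else f2 * η (n - 1)) / f1 ^ p ∧
      armijoGap F V lam (y n) (η n) ≤ 0 ∧
      ∀ k < p, ¬ armijoGap F V lam (y n) ((if n = 0 then ηinit else f2 * η (n - 1)) / f1 ^ k) ≤ 0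

/-- `g` satisfies the Kurdyka–Łojasiewicz inequality at the critical point `ystar`. -/
def IsKLAt {m : ℕ} (g : EuclideanSpace ℝ (Fin m) → ℝ)
    (ystar : EuclideanSpace ℝ (Fin m)) : Prop :=
  ∃ γ' : ℝ, 0 < γ' ∧ ∃ 𝒱 ∈ nhds ystar, ∃ φ φ' : ℝ → ℝ,
    ContinuousOn φ (Set.Icc 0 γ') ∧ (∀ x ∈ Set.Icc 0 γ', 0 ≤ φ x) ∧
    ConcaveOn ℝ (Set.Icc 0 γ') φ ∧ φ 0 = 0 ∧
    (∀ x ∈ Set.Ioo 0 γ', HasDerivAt φ (φ' x) x) ∧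
    ContinuousOn φ' (Set.Ioo 0 γ') ∧
    (∀ x ∈ Set.Ioo 0 γ', 0 < φ' x) ∧
    ∀ y ∈ 𝒱, g ystar < g y → g y < g ystar + γ' →
      1 ≤ φ' (g y - g ystar) * ‖gradient g y‖

open Topology Metric Set

theorem isCompact_sublevel_of_coercive {X : Type*} [SeminormedAddCommGroup X] [ProperSpace X]
    {V : X → ℝ} (hV : Continuous V) (hrad : ∀ C : ℝ, ∃ R : ℝ, ∀ y : X, R ≤ ‖y‖ → C ≤ V y)
    (c : ℝ) : IsCompact {z | V z ≤ c} := by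
  obtain ⟨R, hR⟩ := hrad (c + 1)
  refine (isCompact_closedBall (0 : X) R).of_isClosed_subset (isClosed_le hV continuous_const)
    fun z (hz : V z ≤ c) => mem_closedBall_zero_iff.2 (not_lt.1 fun hzR => ?_)
  linarith [hR z hzR.le]

theorem exists_pos_forall_preimage_Ioc_of_eventually {X : Type*} [TopologicalSpace X]
    {V : X → ℝ} (hV : Continuous V) {a c : ℝ} (hac : a < c) (hK : IsCompact {z | V z ≤ c})
    {P : X → Prop} (hP : ∀ p, V p = a → ∀ᶠ z in 𝓝 p, a < V z → P z) :
    ∃ δ > 0, ∀ z, V z ∈ Ioc a (a + δ) → P z := by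
  by_contra! h
  have hca := sub_pos.2 hac
  choose z hz hPz using fun k : ℕ => h (min (c - a) (1 / (k + 1))) (by positivity)
  have hlim : Tendsto (V ∘ z) atTop (𝓝 a) := by
    have hupper := tendsto_one_div_add_atTop_nhds_zero_nat.const_add a
    rw [add_zero] at hupper
    exact tendsto_of_tendsto_of_tendsto_of_le_of_le tendsto_const_nhds hupper
      (fun k => (hz k).1.le) fun k => (hz k).2.trans (by simp)
  obtain ⟨p, -, hp⟩ := hK.exists_mapClusterPt (f := atTop) (u := z) <| tendsto_principal.2 <|
    .of_forall fun k => (hz k).2.trans (by linarith [min_le_left (c - a) (1 / ((k : ℝ) + 1))])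
  have hVp : V p = a := by
    by_contra hne
    exact ((hp.continuousAt_comp hV.continuousAt).clusterPt.mono hlim).ne
      (disjoint_iff.1 (disjoint_nhds_nhds.2 hne))
  obtain ⟨k, hk⟩ := (hp.frequently (hP p hVp)).exists
  exact hPz k (hk (hz k).1)

theorem tendsto_infDist_of_tendsto_comp {X : Type*} [PseudoMetricSpace X] {K S : Set X}
    (hK : IsCompact K) {V : X → ℝ} (hV : ContinuousOn V K) {a : ℝ}
    (hS : ∀ z ∈ K, V z = a → z ∈ S) {y : ℕ → X} (hy : ∀ n, y n ∈ K)
    (hya : Tendsto (V ∘ y) atTop (𝓝 a)) :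
    Tendsto (fun n => infDist (y n) S) atTop (𝓝 0) := by
  refine tendsto_order.2 ⟨fun b hb => .of_forall fun n => hb.trans_le infDist_nonneg,
    fun ε hε => ?_⟩
  set K' := K ∩ {z | ε ≤ infDist z S}
  have hK' : IsCompact K' :=
    hK.inter_right (isClosed_le continuous_const (continuous_infDist_pt S))
  have ha : a ∉ V '' K' := by
    rintro ⟨z, ⟨hzK, hzε⟩, hza⟩
    exact (hε.trans_le hzε).ne' (infDist_zero_of_mem (hS z hzK hza))
  have hclosed : IsClosed (V '' K') :=
    (hK'.image_of_continuousOn (hV.mono inter_subset_left)).isClosed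
  filter_upwards [hya (hclosed.compl_mem_nhds ha)] with n hn
  exact not_le.1 fun h => hn ⟨y n, ⟨hy n, h⟩, rfl⟩

section Gradient

variable {H : Type*} [NormedAddCommGroup H] [InnerProductSpace ℝ H] [CompleteSpace H]
  {V : H → ℝ}

theorem IsLocalMin.gradient_eq_zero {p : H} (h : IsLocalMin V p) : gradient V p = 0 := by
  simp [gradient, h.fderiv_eq_zero]

theorem ContDiff.continuous_gradient (hV : ContDiff ℝ 1 V) : Continuous (gradient V) :=
  (InnerProductSpace.toDual ℝ H).symm.continuous.comp (hV.continuous_fderiv one_ne_zero)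

theorem hasDerivAt_comp_add_smul {y w : H} {t : ℝ} (hV : DifferentiableAt ℝ V (y + t • w)) :
    HasDerivAt (fun s : ℝ => V (y + s • w)) (inner ℝ (gradient V (y + t • w)) w) t := by
  have hline : HasDerivAt (fun s : ℝ => y + s • w) w t := by
    simpa using ((hasDerivAt_id t).smul_const w).const_add y
  simpa [InnerProductSpace.toDual_apply_apply, Function.comp_def] using
    hV.hasGradientAt.hasFDerivAt.comp_hasDerivAt t hline

end Gradient

section Euclidean

variable {m : ℕ} {F : EuclideanSpace ℝ (Fin m) → EuclideanSpace ℝ (Fin m)}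
  {V : EuclideanSpace ℝ (Fin m) → ℝ} {lam : ℝ}

local notation "E" => EuclideanSpace ℝ (Fin m)

theorem IsKLAt.eventually_gradient_ne_zero {p : E} (h : IsKLAt V p) (hV : ContinuousAt V p) :
    ∀ᶠ z in 𝓝 p, V p < V z → gradient V z ≠ 0 := by
  obtain ⟨γ', hγ', 𝒱, h𝒱, φ, φ', -, -, -, -, -, -, -, hKL⟩ := h
  filter_upwards [h𝒱, hV.eventually (eventually_lt_nhds (lt_add_of_pos_right (V p) hγ'))]
    with z hz𝒱 hzγ' hpz hzero
  have h1 := hKL z hz𝒱 hpz hzγ'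
  rw [hzero, norm_zero, mul_zero] at h1
  norm_num at h1

theorem exists_pos_forall_lyapDeriv_neg {p : E} (hV : Continuous V)
    (hK : IsCompact {z | V z ≤ V p + 1}) (hmin : ∀ z, V p ≤ V z)
    (hVdot : ∀ z, lyapDeriv F V z ≤ 0) (hKL : ∀ q, gradient V q = 0 → IsKLAt V q)
    (hZ : ∀ z, lyapDeriv F V z = 0 → gradient V z = 0) :
    ∃ δ > 0, ∀ z, V z ∈ Ioc (V p) (V p + δ) → lyapDeriv F V z < 0 := by
  refine exists_pos_forall_preimage_Ioc_of_eventually hV (lt_add_one (V p)) hK fun q hq => ?_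
  have hcrit : gradient V q = 0 :=
    IsLocalMin.gradient_eq_zero (.of_forall fun z => hq.trans_le (hmin z))
  filter_upwards [(hKL q hcrit).eventually_gradient_ne_zero hV.continuousAt] with z hz hpz
  exact (hVdot z).lt_of_ne (mt (hZ z) (hz (hq ▸ hpz)))

theorem continuous_lyapDeriv (hF : Continuous F) (hV : ContDiff ℝ 1 V) :
    Continuous (lyapDeriv F V) :=
  hV.continuous_gradient.inner hF

theorem armijoGap_nonpos_iff {y : E} {η : ℝ} :
    armijoGap F V lam y η ≤ 0 ↔ V (y + η • F y) ≤ V y + lam * η * lyapDeriv F V y := by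
  rw [armijoGap, sub_sub, sub_nonpos]

theorem IsCompact.exists_pos_armijoGap_nonpos (hlam : lam < 1) (hF : Continuous F)
    (hV : ContDiff ℝ 1 V) {A : Set E} (hA : IsCompact A) (hneg : ∀ z ∈ A, lyapDeriv F V z < 0) :
    ∃ e > 0, ∀ z ∈ A, ∀ t, 0 < t → t ≤ e → armijoGap F V lam z t ≤ 0 := by
  -- By the mean value theorem it suffices that `Φ s z < 0` for small `s ≥ 0`, uniformly on `A`;
  -- at `s = 0` this is `(1 - lam) * V̇ z < 0`, and the tube lemma spreads it.
  set Φ : ℝ → E → ℝ := fun s z =>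
    inner ℝ (gradient V (z + s • F z)) (F z) - lam * lyapDeriv F V z
  have hΦ : Continuous fun q : ℝ × E => Φ q.1 q.2 := by
    have := hV.continuous_gradient
    simp only [Φ, lyapDeriv]
    fun_prop
  have hΦ0 : ∀ z ∈ A, Φ 0 z < 0 := fun z hz => by
    have : Φ 0 z = (1 - lam) * lyapDeriv F V z := by simp [Φ, lyapDeriv]; ring
    rw [this]
    exact mul_neg_of_pos_of_neg (by linarith) (hneg z hz)
  have hev : ∀ᶠ s in 𝓝 (0 : ℝ), ∀ z ∈ A, Φ s z < 0 := by
    refine hA.eventually_forall_of_forall_eventually (P := fun s z => Φ s z < 0) fun z hz => ?_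
    exact (hΦ.tendsto ((0 : ℝ), z)).eventually (eventually_lt_nhds (hΦ0 z hz))
  obtain ⟨e, he, hball⟩ := Metric.eventually_nhds_iff.1 hev
  refine ⟨e / 2, half_pos he, fun z hz t ht hte => ?_⟩
  have hdiff : Differentiable ℝ V := hV.differentiable one_ne_zero
  obtain ⟨ξ, hξ, hslope⟩ := exists_hasDerivAt_eq_slope (fun s => V (z + s • F z))
    (fun s => inner ℝ (gradient V (z + s • F z)) (F z)) ht
    (hdiff.continuous.comp (by fun_prop)).continuousOn
    fun s _ => hasDerivAt_comp_add_smul (hdiff _)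
  have hξe : dist ξ 0 < e := by
    rw [Real.dist_eq, sub_zero, abs_of_pos hξ.1]
    linarith [hξ.2]
  have hΦξ := hball hξe z hz
  simp only [zero_smul, add_zero, sub_zero, Φ] at hslope hΦξ
  rw [eq_div_iff ht.ne'] at hslope
  rw [armijoGap_nonpos_iff]
  nlinarith

/-- `IsLCR` and `IsLCM` unfold at each `n` to this step, with trial step `ηinit`, resp.
`f2 * η (n - 1)`. -/
def IsBacktrackingStep (F : E → E) (V : E → ℝ) (lam f1 : ℝ) (y y' : E) (b η : ℝ) : Prop :=
  y' = y + η • F y ∧ ∃ p : ℕ, η = b / f1 ^ p ∧ armijoGap F V lam y η ≤ 0 ∧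
    ∀ k < p, ¬ armijoGap F V lam y (b / f1 ^ k) ≤ 0

namespace IsBacktrackingStep

variable {f1 b η : ℝ} {y y' : EuclideanSpace ℝ (Fin m)}

theorem pos (h : IsBacktrackingStep F V lam f1 y y' b η) (hb : 0 < b) (hf1 : 0 < f1) :
    0 < η := by
  obtain ⟨-, p, rfl, -⟩ := h
  positivity

theorem value_le (h : IsBacktrackingStep F V lam f1 y y' b η) :
    V y' ≤ V y + lam * η * lyapDeriv F V y := by
  obtain ⟨rfl, -, -, harm, -⟩ := h
  exact armijoGap_nonpos_iff.1 harm

/-- Either no backtracking happens, or the previous trial `b / f1 ^ q` was rejected and hence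
exceeds `e`. -/
theorem min_le (h : IsBacktrackingStep F V lam f1 y y' b η) (hb : 0 < b) (hf1 : 0 < f1) {e : ℝ}
    (harm : ∀ t, 0 < t → t ≤ e → armijoGap F V lam y t ≤ 0) : min b (e / f1) ≤ η := by
  obtain ⟨-, p, rfl, -, hfail⟩ := h
  cases p with
  | zero => simp
  | succ q =>
    have he : e < b / f1 ^ q :=
      not_le.1 fun hle => hfail q q.lt_succ_self (harm _ (by positivity) hle)
    calc min b (e / f1) ≤ e / f1 := min_le_right _ _
      _ ≤ b / f1 ^ (q + 1) := by
        rw [pow_succ, ← div_div]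
        exact div_le_div_of_nonneg_right he.le hf1.le

end IsBacktrackingStep

/-- The second clause abstracts the backtracking rule: the steps stay bounded away from zero as
soon as every step up to some `e > 0` is accepted along the orbit. -/
def IsArmijoDescent (F : E → E) (V : E → ℝ) (lam : ℝ) (y : ℕ → E) (η : ℕ → ℝ) : Prop :=
  (∀ n, 0 < η n ∧ V (y (n + 1)) ≤ V (y n) + lam * η n * lyapDeriv F V (y n)) ∧
    ∀ e > 0, (∀ n t, 0 < t → t ≤ e → armijoGap F V lam (y n) t ≤ 0) → ∃ β > 0, ∀ n, β ≤ η n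

theorem IsLCR.isArmijoDescent {ηinit f1 : ℝ} {y : ℕ → E} {η : ℕ → ℝ}
    (h : IsLCR F V lam ηinit f1 y η) (hηinit : 0 < ηinit) (hf1 : 0 < f1) :
    IsArmijoDescent F V lam y η := by
  have hstep (n : ℕ) : IsBacktrackingStep F V lam f1 (y n) (y (n + 1)) ηinit (η n) := h n
  exact ⟨fun n => ⟨(hstep n).pos hηinit hf1, (hstep n).value_le⟩, fun e he harm =>
    ⟨min ηinit (e / f1), by positivity, fun n => (hstep n).min_le hηinit hf1 (harm n)⟩⟩

theorem IsLCM.isArmijoDescent {ηinit f1 f2 : ℝ} {y : ℕ → E} {η : ℕ → ℝ}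
    (h : IsLCM F V lam ηinit f1 f2 y η) (hηinit : 0 < ηinit) (hf1 : 0 < f1) (hf2 : 1 ≤ f2) :
    IsArmijoDescent F V lam y η := by
  have hstep (n : ℕ) : IsBacktrackingStep F V lam f1 (y n) (y (n + 1))
      (if n = 0 then ηinit else f2 * η (n - 1)) (η n) := h n
  have hstep0 : IsBacktrackingStep F V lam f1 (y 0) (y 1) ηinit (η 0) := by
    simpa using hstep 0
  have hstep_succ (n : ℕ) : IsBacktrackingStep F V lam f1 (y (n + 1)) (y (n + 2))
      (f2 * η n) (η (n + 1)) := by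
    simpa using hstep (n + 1)
  have hpos (n : ℕ) : 0 < η n := by
    induction n with
    | zero => exact hstep0.pos hηinit hf1
    | succ n ih => exact (hstep_succ n).pos (by positivity) hf1
  refine ⟨fun n => ⟨hpos n, (hstep n).value_le⟩, fun e he harm =>
    ⟨min ηinit (e / f1), by positivity, ?_⟩⟩
  intro n
  induction n with
  | zero => exact hstep0.min_le hηinit hf1 (harm 0)
  | succ n ih =>
    have htrial : η n ≤ f2 * η n := le_mul_of_one_le_left (hpos n).le hf2
    refine le_trans ?_ ((hstep_succ n).min_le (by linarith [hpos n]) hf1 (harm (n + 1)))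
    exact le_min (ih.trans htrial) (min_le_right _ _)

namespace IsArmijoDescent

variable {y : ℕ → EuclideanSpace ℝ (Fin m)} {η : ℕ → ℝ}

theorem antitone (h : IsArmijoDescent F V lam y η) (hlam : 0 < lam)
    (hVdot : ∀ z, lyapDeriv F V z ≤ 0) : Antitone (V ∘ y) :=
  antitone_nat_of_succ_le fun n => by
    obtain ⟨hη, hdec⟩ := h.1 n
    have : lam * η n * lyapDeriv F V (y n) ≤ 0 :=
      mul_nonpos_of_nonneg_of_nonpos (by positivity) (hVdot _)
    exact (hdec.trans (by linarith) : V (y (n + 1)) ≤ V (y n))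

/-- On `A` the steps are bounded below and `V̇ ≤ -ρ < 0`, so `V` would drop by a fixed amount at
every step while staying bounded below. -/
theorem not_forall_mem (h : IsArmijoDescent F V lam y η) (hlam : lam ∈ Ioo 0 1)
    (hF : Continuous F) (hV : ContDiff ℝ 1 V) {A : Set (EuclideanSpace ℝ (Fin m))}
    (hA : IsCompact A) (hneg : ∀ z ∈ A, lyapDeriv F V z < 0) : ¬ ∀ n, y n ∈ A := by
  intro hyA
  obtain ⟨z₀, hz₀, hmax⟩ :=
    hA.exists_isMaxOn ⟨y 0, hyA 0⟩ (continuous_lyapDeriv hF hV).continuousOn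
  obtain ⟨e, he, harm⟩ := hA.exists_pos_armijoGap_nonpos hlam.2 hF hV hneg
  obtain ⟨β, hβ, hβη⟩ := h.2 e he fun n => harm (y n) (hyA n)
  obtain ⟨L, hL⟩ := hA.bddBelow_image hV.continuous.continuousOn
  set κ := lam * β * -lyapDeriv F V z₀
  have hκ : 0 < κ := mul_pos (mul_pos hlam.1 hβ) (neg_pos.2 (hneg z₀ hz₀))
  have hdrop (n : ℕ) : V (y (n + 1)) ≤ V (y n) - κ := by
    obtain ⟨hη, hdec⟩ := h.1 n
    have h1 : lyapDeriv F V (y n) ≤ lyapDeriv F V z₀ := hmax (hyA n)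
    have h2 : lam * η n * lyapDeriv F V (y n) ≤ lam * η n * lyapDeriv F V z₀ :=
      mul_le_mul_of_nonneg_left h1 (mul_pos hlam.1 hη).le
    have h3 : lam * η n * lyapDeriv F V z₀ ≤ lam * β * lyapDeriv F V z₀ :=
      mul_le_mul_of_nonpos_right (mul_le_mul_of_nonneg_left (hβη n) hlam.1.le)
        (hneg z₀ hz₀).le
    linarith
  have hiter (n : ℕ) : V (y n) ≤ V (y 0) - n * κ := by
    induction n with
    | zero => simp
    | succ n ih => push_cast; linarith [hdrop n]
  obtain ⟨n, hn⟩ := exists_nat_gt ((V (y 0) - L) / κ)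
  rw [div_lt_iff₀ hκ] at hn
  linarith [hiter n, hL ⟨y n, hyA n, rfl⟩]

theorem tendsto_value (h : IsArmijoDescent F V lam y η) (hlam : lam ∈ Ioo 0 1)
    (hF : Continuous F) (hV : ContDiff ℝ 1 V) (hVdot : ∀ z, lyapDeriv F V z ≤ 0) {a b : ℝ}
    (hmin : ∀ z, a ≤ V z) (hK : IsCompact {z | V z ≤ b})
    (hneg : ∀ z, V z ∈ Ioc a b → lyapDeriv F V z < 0) (hy0 : V (y 0) ≤ b) :
    Tendsto (V ∘ y) atTop (𝓝 a) := by
  have hanti := h.antitone hlam.1 hVdot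
  have hbdd : BddBelow (range (V ∘ y)) := ⟨a, forall_mem_range.2 fun n => hmin _⟩
  convert tendsto_atTop_ciInf hanti hbdd
  refine le_antisymm (le_ciInf fun n => hmin _) (not_lt.1 fun hac => ?_)
  refine h.not_forall_mem hlam hF hV (hK.inter_right (isClosed_le continuous_const hV.continuous))
    (fun z hz => hneg z ⟨hac.trans_le hz.2, hz.1⟩) fun n => ⟨?_, ciInf_le hbdd n⟩
  exact (hanti n.zero_le).trans hy0

end IsArmijoDescent

end Euclidean

theorem global_minima_attractive_general
    {m : ℕ} (lam ηinit f1 f2 : ℝ)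
    (hlam : lam ∈ Set.Ioo (0 : ℝ) 1) (hηinit : 0 < ηinit) (hf1 : 1 < f1) (hf2 : 1 < f2)
    (F : EuclideanSpace ℝ (Fin m) → EuclideanSpace ℝ (Fin m))
    (V : EuclideanSpace ℝ (Fin m) → ℝ)
    (hF : Continuous F) (hV : ContDiff ℝ 2 V)
    (hVdot : ∀ y, lyapDeriv F V y ≤ 0)
    (hrad : ∀ C : ℝ, ∃ Rr : ℝ, ∀ y : EuclideanSpace ℝ (Fin m), Rr ≤ ‖y‖ → C ≤ V y)
    (hKL : ∀ ystar, gradient V ystar = 0 → IsKLAt V ystar)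
    (hZ : ∀ y, lyapDeriv F V y = 0 → gradient V y = 0)
    (G : Set (EuclideanSpace ℝ (Fin m)))
    (hG : G = {ystar | ∀ y, V ystar ≤ V y}) (hGne : G.Nonempty) :
    ∃ γ > 0, ∀ (y : ℕ → EuclideanSpace ℝ (Fin m)) (η : ℕ → ℝ),
      (IsLCR F V lam ηinit f1 y η ∨ IsLCM F V lam ηinit f1 f2 y η) →
      Metric.infDist (y 0) G < γ →
      Tendsto (fun n => Metric.infDist (y n) G) atTop (nhds 0) := by
  obtain ⟨p, hp⟩ := hGne
  have hmin : ∀ z, V p ≤ V z := by rw [hG] at hp; exact hp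
  obtain rfl : G = {z | V z ≤ V p} :=
    hG.trans <| Set.ext fun z => ⟨fun hz => hz p, fun hz w => hz.trans (hmin w)⟩
  have hsub := isCompact_sublevel_of_coercive hV.continuous hrad
  obtain ⟨δ, hδ, hneg⟩ :=
    exists_pos_forall_lyapDeriv_neg hV.continuous (hsub _) hmin hVdot hKL hZ
  obtain ⟨γ, hγ, hγG⟩ := (hsub (V p)).exists_thickening_subset_open
    (isOpen_lt hV.continuous continuous_const) (t := {z | V z < V p + δ})
    fun z (hz : V z ≤ V p) => show V z < V p + δ by linarith
  refine ⟨γ, hγ, fun y η halg hy0 => ?_⟩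
  have hdesc : IsArmijoDescent F V lam y η := by
    rcases halg with h | h
    exacts [h.isArmijoDescent hηinit (by linarith), h.isArmijoDescent hηinit (by linarith) hf2.le]
  have hy0δ : V (y 0) ≤ V p + δ := (hγG ((mem_thickening_iff_infDist_lt ⟨p, hp⟩).2 hy0)).le
  have hyδ (n : ℕ) : V (y n) ≤ V p + δ := (hdesc.antitone hlam.1 hVdot n.zero_le).trans hy0δ
  have hval := hdesc.tendsto_value hlam hF (hV.of_le (by norm_num)) hVdot hmin (hsub _) hneg hy0δ
  exact tendsto_infDist_of_tendsto_comp (hsub _) hV.continuous.continuousOn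
    (fun z _ hz => hz.le) hyδ hval

/-- **Attractivity of the set of global minima.** If `V` is radially unbounded, KL at every
one of its critical points, and `V̇(y) = 0` implies `∇V(y) = 0`, then the set `G_V` of global
minima of `V` is attractive for the LCR and LCM algorithms. -/
theorem global_minima_attractive
    {m : ℕ} (lam ηinit f1 f2 : ℝ)
    (hlam : lam ∈ Set.Ioo (0 : ℝ) 1) (hηinit : 0 < ηinit) (hf1 : 1 < f1) (hf2 : 1 < f2)
    (F : EuclideanSpace ℝ (Fin m) → EuclideanSpace ℝ (Fin m))
    (V : EuclideanSpace ℝ (Fin m) → ℝ)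
    (hF : Continuous F) (hV : ContDiff ℝ 2 V) (hV0 : ∀ y, 0 ≤ V y)
    (hVdot : ∀ y, lyapDeriv F V y ≤ 0)
    (hrad : ∀ C : ℝ, ∃ Rr : ℝ, ∀ y : EuclideanSpace ℝ (Fin m), Rr ≤ ‖y‖ → C ≤ V y)
    (hKL : ∀ ystar, gradient V ystar = 0 → IsKLAt V ystar)
    (hZ : ∀ y, lyapDeriv F V y = 0 → gradient V y = 0)
    (G : Set (EuclideanSpace ℝ (Fin m)))
    (hG : G = {ystar | ∀ y, V ystar ≤ V y}) (hGne : G.Nonempty) :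
    ∃ γ > 0, ∀ (y : ℕ → EuclideanSpace ℝ (Fin m)) (η : ℕ → ℝ),
      (IsLCR F V lam ηinit f1 y η ∨ IsLCM F V lam ηinit f1 f2 y η) →
      Metric.infDist (y 0) G < γ →
      Tendsto (fun n => Metric.infDist (y n) G) atTop (nhds 0) :=
  global_minima_attractive_general lam ηinit f1 f2 hlam hηinit hf1 hf2 F V hF hV hVdot hrad hKL hZ G
    hG hGne
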